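/- arXiv:1908.09068 — 2 statements merged into one kernel-verified Lean document; each statement's English description precedes it below -/
import Mathlib

section
/- Let H be a finite type, 𝔐 a finite family of subsets of H, and L its meet-closure. For every x ∈ L, the cardinality of x equals the sum, over y ∈ L with y ⊆ x, of the cardinalities of PEC(y); equivalently, the cardinality of PEC(x) equals the cardinality of x minus the sum of the cardinalities of PEC(y) over y ∈ L with y ⊊ x. -/
/-! Every header `a` lies in a least element of the meet-closure, the intersection of the
members of `𝔐` containing it, and `PEC 𝔐 y` is exactly the set of headers whose least element
is `y`. So the classes are the fibres of this map, and an element `x` of the meet-closure is the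
disjoint union of the fibres over the `y ⊆ x`. -/

open Set

/-- The meet-closure of a family `𝔐` of subsets of `H`: all intersections
`⋂₀ S` over subfamilies `S ⊆ 𝔐`, where the empty intersection is `univ`. -/
def meetClosure {H : Type*} (𝔐 : Set (Set H)) : Set (Set H) :=
  {x | ∃ S ⊆ 𝔐, x = ⋂₀ S}

/-- The packet equivalence class of `x`: the elements of `x` not contained in
any strictly smaller element of the meet-closure of `𝔐`. -/
def PEC {H : Type*} (𝔐 : Set (Set H)) (x : Set H) : Set H :=
  x \ ⋃₀ {y ∈ meetClosure 𝔐 | y ⊂ x}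

section

variable {H : Type*} {𝔐 : Set (Set H)}

def meetHull (𝔐 : Set (Set H)) (a : H) : Set H :=
  ⋂₀ {P ∈ 𝔐 | a ∈ P}

theorem meetHull_mem_meetClosure (a : H) : meetHull 𝔐 a ∈ meetClosure 𝔐 :=
  ⟨_, sep_subset _ _, rfl⟩

theorem mem_meetHull (a : H) : a ∈ meetHull 𝔐 a :=
  fun _ hP => hP.2

theorem meetHull_subset {a : H} {y : Set H} (hy : y ∈ meetClosure 𝔐) (ha : a ∈ y) :
    meetHull 𝔐 a ⊆ y := by
  obtain ⟨S, hS, rfl⟩ := hy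
  exact fun b hb P hP => hb P ⟨hS hP, ha P hP⟩

theorem mem_PEC_iff {a : H} {y : Set H} (hy : y ∈ meetClosure 𝔐) :
    a ∈ PEC 𝔐 y ↔ meetHull 𝔐 a = y := by
  constructor
  · rintro ⟨hay, hmin⟩
    refine (meetHull_subset hy hay).eq_of_not_ssubset fun hlt => hmin ?_
    exact ⟨meetHull 𝔐 a, ⟨meetHull_mem_meetClosure a, hlt⟩, mem_meetHull a⟩
  · rintro rfl
    refine ⟨mem_meetHull a, ?_⟩
    rintro ⟨z, ⟨hz, hlt⟩, haz⟩
    exact hlt.not_subset (meetHull_subset hz haz)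

theorem PEC_subset (𝔐 : Set (Set H)) (y : Set H) : PEC 𝔐 y ⊆ y :=
  sdiff_subset

theorem pairwiseDisjoint_PEC : (meetClosure 𝔐).PairwiseDisjoint (PEC 𝔐) := by
  intro y hy z hz hne
  refine Set.disjoint_left.2 fun a hay haz => hne ?_
  rw [← (mem_PEC_iff hy).1 hay, (mem_PEC_iff hz).1 haz]

theorem biUnion_PEC_eq {x : Set H} (hx : x ∈ meetClosure 𝔐) :
    ⋃ y ∈ {y ∈ meetClosure 𝔐 | y ⊆ x}, PEC 𝔐 y = x := by
  refine Subset.antisymm (iUnion₂_subset fun y hy => (PEC_subset 𝔐 y).trans hy.2) ?_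
  intro a hax
  have hy : meetHull 𝔐 a ∈ meetClosure 𝔐 := meetHull_mem_meetClosure a
  exact mem_biUnion ⟨hy, meetHull_subset hx hax⟩ ((mem_PEC_iff hy).2 rfl)

theorem ncard_eq_finsum_ncard_PEC [Finite H] {x : Set H} (hx : x ∈ meetClosure 𝔐) :
    x.ncard = ∑ᶠ y ∈ {y ∈ meetClosure 𝔐 | y ⊆ x}, (PEC 𝔐 y).ncard := by
  conv_lhs => rw [← biUnion_PEC_eq hx]
  exact (toFinite _).ncard_biUnion (fun _ _ => toFinite _)
    (pairwiseDisjoint_PEC.subset (sep_subset _ _))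

theorem setOf_subset_eq_insert_setOf_ssubset {x : Set H} (hx : x ∈ meetClosure 𝔐) :
    {y ∈ meetClosure 𝔐 | y ⊆ x} = insert x {y ∈ meetClosure 𝔐 | y ⊂ x} := by
  ext y
  simp only [mem_insert_iff, mem_ofPred_eq, subset_iff_ssubset_or_eq]
  constructor
  · rintro ⟨hy, hlt | rfl⟩
    exacts [Or.inr ⟨hy, hlt⟩, Or.inl rfl]
  · rintro (rfl | ⟨hy, hlt⟩)
    exacts [⟨hx, Or.inr rfl⟩, ⟨hy, Or.inl hlt⟩]

end

/-- The cardinality of a lattice element is the sum of the cardinalities of the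
packet equivalence classes of the lattice elements below it; equivalently, the
cardinality of `PEC x` is the cardinality of `x` minus the sum of the
cardinalities of the `PEC y` for lattice elements `y ⊊ x`. -/
theorem ncard_eq_sum_pec_ncard {H : Type*} [Fintype H] (𝔐 : Set (Set H)) :
    ∀ x ∈ meetClosure 𝔐,
      x.ncard = ∑ᶠ y ∈ {y ∈ meetClosure 𝔐 | y ⊆ x}, (PEC 𝔐 y).ncard ∧
      (PEC 𝔐 x).ncard = x.ncard - ∑ᶠ y ∈ {y ∈ meetClosure 𝔐 | y ⊂ x}, (PEC 𝔐 y).ncard := by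
  intro x hx
  have hsum := ncard_eq_finsum_ncard_PEC hx
  refine ⟨hsum, ?_⟩
  rw [setOf_subset_eq_insert_setOf_ssubset hx,
    finsum_mem_insert _ (fun h => h.2.ne rfl) (toFinite _)] at hsum
  omega
end

section
/- Let H be a finite nonempty type and 𝔐 a finite family of subsets of H. The set of atomic predicates for 𝔐 is unique: any family A of subsets of H satisfying conditions (1)–(5) of atomic predicates equals the collection of cells of 𝔐. -/
open Set

/-- The cell of a point `p` with respect to `𝔐`: all points lying in exactly
the same members of `𝔐` as `p`. -/
def cell {H : Type*} (𝔐 : Set (Set H)) (p : H) : Set H :=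
  {q | ∀ P ∈ 𝔐, q ∈ P ↔ p ∈ P}


/-- `A` is a set of atomic predicates for `𝔐`: (1) every member is nonempty,
(2) the union of `A` is everything, (3) distinct members are disjoint,
(4) every nonempty `P ∈ 𝔐` is a union of members of `A`, and
(5) `A` has minimal cardinality among all families satisfying (1)–(4). -/
def IsAtomicPredicates {H : Type*} (𝔐 : Set (Set H)) (A : Set (Set H)) : Prop :=
  (∀ a ∈ A, a.Nonempty) ∧
  ⋃₀ A = Set.univ ∧
  A.Pairwise Disjoint ∧
  (∀ P ∈ 𝔐, P.Nonempty → ∃ B ⊆ A, P = ⋃₀ B) ∧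
  ∀ B₀ : Set (Set H),
    (∀ a ∈ B₀, a.Nonempty) → ⋃₀ B₀ = Set.univ → B₀.Pairwise Disjoint →
    (∀ P ∈ 𝔐, P.Nonempty → ∃ B ⊆ B₀, P = ⋃₀ B) →
    A.ncard ≤ B₀.ncard

/-!
The cells of `𝔐` are the classes of the equivalence relation "lies in the same members of `𝔐`",
so they form a partition satisfying (1)–(4). Condition (4) forces every partition `A` to refine
it: a member of `A` meeting some `P ∈ 𝔐` lies inside `P`. Collapsing the finer relation onto the
coarser one is then a surjection between finite quotients, and minimality of `|A|` makes it a
bijection, so the two relations, and hence their classes, coincide.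
-/

def cellSetoid {H : Type*} (𝔐 : Set (Set H)) : Setoid H where
  r p q := ∀ P ∈ 𝔐, p ∈ P ↔ q ∈ P
  iseqv :=
    ⟨fun _ _ _ => Iff.rfl, fun h P hP => (h P hP).symm,
      fun h₁ h₂ P hP => (h₁ P hP).trans (h₂ P hP)⟩

lemma classes_cellSetoid {H : Type*} (𝔐 : Set (Set H)) :
    (cellSetoid 𝔐).classes = {s : Set H | ∃ p : H, s = cell 𝔐 p} :=
  rfl

namespace Setoid

variable {α : Type*}

lemma ncard_classes_eq_natCard_quotient (r : Setoid α) : r.classes.ncard = Nat.card (Quotient r) :=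
  (Nat.card_congr r.quotientEquivClasses).symm

lemma eq_of_le_of_ncard_classes_le {r s : Setoid α} [Finite (Quotient r)] (hle : r ≤ s)
    (hcard : r.classes.ncard ≤ s.classes.ncard) : r = s := by
  let f : Quotient r → Quotient s := Quotient.map id fun _ _ h => hle h
  have hf : f.Bijective := by
    refine (Quotient.map_surjective _ Function.surjective_id).bijective_of_nat_card_le ?_
    rwa [← ncard_classes_eq_natCard_quotient, ← ncard_classes_eq_natCard_quotient]
  exact le_antisymm hle fun x y hxy => Quotient.exact (hf.injective (Quotient.sound hxy))

lemma exists_subset_classes_sUnion_eq (r : Setoid α) {P : Set α}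
    (hP : ∀ x y, r x y → x ∈ P → y ∈ P) : ∃ B ⊆ r.classes, P = ⋃₀ B := by
  refine ⟨{s | ∃ p ∈ P, s = {x | r x p}}, fun s ⟨p, _, hs⟩ => ⟨p, hs⟩, ?_⟩
  ext x
  refine ⟨fun hx => ⟨_, ⟨x, hx, rfl⟩, r.refl' x⟩, ?_⟩
  rintro ⟨_, ⟨p, hp, rfl⟩, hxp⟩
  exact hP p x (r.symm' hxp) hp

end Setoid

lemma mkClasses_le_cellSetoid {H : Type*} {𝔐 A : Set (Set H)} (hA : Setoid.IsPartition A)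
    (hunions : ∀ P ∈ 𝔐, P.Nonempty → ∃ B ⊆ A, P = ⋃₀ B) :
    Setoid.mkClasses A hA.2 ≤ cellSetoid 𝔐 := by
  have hsat : ∀ x y, Setoid.mkClasses A hA.2 x y → ∀ P ∈ 𝔐, x ∈ P → y ∈ P := by
    intro x y hxy P hP hxP
    obtain ⟨B, hBA, rfl⟩ := hunions P hP ⟨x, hxP⟩
    obtain ⟨b, hb, hxb⟩ := hxP
    exact ⟨b, hb, hxy b (hBA hb) hxb⟩
  exact fun x y hxy P hP => ⟨hsat x y hxy P hP, hsat y x (Setoid.symm' _ hxy) P hP⟩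

theorem atomicPredicates_unique_general {H : Type*} [Fintype H]
    (𝔐 : Set (Set H)) (A : Set (Set H)) (hA : IsAtomicPredicates 𝔐 A) :
    A = {s : Set H | ∃ p : H, s = cell 𝔐 p} := by
  obtain ⟨hne, hunion, hdisj, hunions, hmin⟩ := hA
  have hA : Setoid.IsPartition A :=
    Set.PairwiseDisjoint.isPartition_of_exists_of_ne_empty hdisj (sUnion_eq_univ_iff.mp hunion)
      fun h => not_nonempty_empty (hne ∅ h)
  have hcells := Setoid.isPartition_classes (cellSetoid 𝔐)
  have hcard : A.ncard ≤ (cellSetoid 𝔐).classes.ncard :=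
    hmin _ (fun _ => Setoid.nonempty_of_mem_partition hcells) hcells.sUnion_eq_univ
      hcells.pairwiseDisjoint fun P hP _ =>
        (cellSetoid 𝔐).exists_subset_classes_sUnion_eq fun _ _ h => (h P hP).mp
  have heq : Setoid.mkClasses A hA.2 = cellSetoid 𝔐 :=
    Setoid.eq_of_le_of_ncard_classes_le (mkClasses_le_cellSetoid hA hunions)
      (by rwa [Setoid.classes_mkClasses A hA])
  rw [← classes_cellSetoid, ← heq, Setoid.classes_mkClasses A hA]

/-- Atomic predicates are unique: any family satisfying conditions (1)–(5)
equals the collection of cells of `𝔐`. -/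
theorem atomicPredicates_unique {H : Type*} [Fintype H] [Nonempty H]
    (𝔐 : Set (Set H)) (A : Set (Set H)) (hA : IsAtomicPredicates 𝔐 A) :
    A = {s : Set H | ∃ p : H, s = cell 𝔐 p} :=
  atomicPredicates_unique_general 𝔐 A hA
end
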